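/- With Z̄_t = ζ(Z_t) for ζ respecting the bipartition, I(Z̄_1; Z̄_2) = I(X̄; Ȳ) + H(U) in the stationary bipartite random walk. -/

import Mathlib

open scoped BigOperators Classical

/-- First marginal of a joint distribution on a product of finite types. -/
noncomputable def margFst {α β : Type*} [Fintype β] (p : α × β → ℝ) (a : α) : ℝ :=
  ∑ b, p (a, b)

/-- Second marginal of a joint distribution on a product of finite types. -/
noncomputable def margSnd {α β : Type*} [Fintype α] (p : α × β → ℝ) (b : β) : ℝ :=
  ∑ a, p (a, b)

/-- Mutual information of a joint distribution on a product of finite types. -/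
noncomputable def mutualInfo {α β : Type*} [Fintype α] [Fintype β] (p : α × β → ℝ) : ℝ :=
  ∑ a, ∑ b, p (a, b) * Real.log (p (a, b) / (margFst p a * margSnd p b))

/-- Joint distribution of `(A, ζ(B))` when `(A, B) ~ p`. -/
noncomputable def pushRight {α β γ : Type*} [Fintype β] (ζ : β → γ) (p : α × β → ℝ) :
    α × γ → ℝ :=
  fun ac => ∑ b, if ζ b = ac.2 then p (ac.1, b) else 0

/-- Joint distribution of `(φ(A), B)` when `(A, B) ~ p`. -/
noncomputable def pushLeft {α β γ : Type*} [Fintype α] (φ : α → γ) (p : α × β → ℝ) :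
    γ × β → ℝ :=
  fun cb => ∑ a, if φ a = cb.1 then p (a, cb.2) else 0

/-- Joint distribution of `(φ(A), ψ(B))` when `(A, B) ~ p`. -/
noncomputable def pushBoth {α β γ δ : Type*} [Fintype α] [Fintype β] (φ : α → γ) (ψ : β → δ)
    (p : α × β → ℝ) : γ × δ → ℝ :=
  fun cd => ∑ a, ∑ b, if φ a = cd.1 ∧ ψ b = cd.2 then p (a, b) else 0

/-- Shannon entropy of a distribution on a finite type. -/
noncomputable def entropy {α : Type*} [Fintype α] (q : α → ℝ) : ℝ :=
  -∑ a, q a * Real.log (q a)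

/-- Transition matrix of the simple random walk on the bipartite graph with weight matrix `W`:
`A = D⁻¹ [[0, W], [Wᵀ, 0]]`. -/
noncomputable def bipA {X Y : Type*} [Fintype X] [Fintype Y] (W : X → Y → ℝ) :
    (X ⊕ Y) → (X ⊕ Y) → ℝ
  | Sum.inl x, Sum.inr y => W x y / ∑ y', W x y'
  | Sum.inr y, Sum.inl x => W x y / ∑ x', W x' y
  | Sum.inl _, Sum.inl _ => 0
  | Sum.inr _, Sum.inr _ => 0

/-- The candidate invariant distribution: `μ(i) = P_X(i)/2` on `X` and `μ(j) = P_Y(j)/2` on `Y`,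
where `P_{X,Y}` is `W` normalized to a probability distribution. -/
noncomputable def bipMu {X Y : Type*} [Fintype X] [Fintype Y] (W : X → Y → ℝ) : (X ⊕ Y) → ℝ
  | Sum.inl x => (∑ y, W x y) / (2 * ∑ x', ∑ y', W x' y')
  | Sum.inr y => (∑ x, W x y) / (2 * ∑ x', ∑ y', W x' y')

/-- Adjacency relation of the bipartite graph induced by `W` (an edge where the weight is
positive). -/
def bipAdj {X Y : Type*} (W : X → Y → ℝ) : (X ⊕ Y) → (X ⊕ Y) → Prop
  | Sum.inl x, Sum.inr y => 0 < W x y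
  | Sum.inr y, Sum.inl x => 0 < W x y
  | Sum.inl _, Sum.inl _ => False
  | Sum.inr _, Sum.inr _ => False

/-- Irreducibility (connectedness) of the bipartite graph induced by `W`. -/
def bipIrreducible {X Y : Type*} (W : X → Y → ℝ) : Prop :=
  ∀ s t : X ⊕ Y, Relation.ReflTransGen (bipAdj W) s t

/-- Joint distribution of two consecutive states `(Z₁, Z₂)` of the stationary random walk. -/
noncomputable def bipJoint {X Y : Type*} [Fintype X] [Fintype Y] (W : X → Y → ℝ) :
    (X ⊕ Y) × (X ⊕ Y) → ℝ :=
  fun st => bipMu W st.1 * bipA W st.1 st.2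

/-- The joint distribution `P_{X,Y}` obtained by normalizing `W`. -/
noncomputable def pXYof {X Y : Type*} [Fintype X] [Fintype Y] (W : X → Y → ℝ) : X × Y → ℝ :=
  fun xy => W xy.1 xy.2 / ∑ x, ∑ y, W x y

/- ## Auxiliary lemmas -/

lemma row_pos' {X Y : Type*} [Fintype X] [Fintype Y] [Nonempty Y]
    (W : X → Y → ℝ) (hW : ∀ x y, 0 ≤ W x y) (hirr : bipIrreducible W) (x : X) :
    0 < ∑ y, W x y := by
  obtain ⟨y0⟩ := (inferInstance : Nonempty Y)
  rcases Relation.ReflTransGen.cases_head (hirr (Sum.inl x) (Sum.inr y0)) with heq | ⟨c, hc, _⟩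
  · exact absurd heq (by simp)
  · cases c with
    | inl x' => exact hc.elim
    | inr y =>
      exact lt_of_lt_of_le hc (Finset.single_le_sum (fun y _ => hW x y) (Finset.mem_univ y))

lemma col_pos' {X Y : Type*} [Fintype X] [Fintype Y] [Nonempty X]
    (W : X → Y → ℝ) (hW : ∀ x y, 0 ≤ W x y) (hirr : bipIrreducible W) (y : Y) :
    0 < ∑ x, W x y := by
  obtain ⟨x0⟩ := (inferInstance : Nonempty X)
  rcases Relation.ReflTransGen.cases_head (hirr (Sum.inr y) (Sum.inl x0)) with heq | ⟨c, hc, _⟩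
  · exact absurd heq (by simp)
  · cases c with
    | inr y' => exact hc.elim
    | inl x =>
      exact lt_of_lt_of_le hc (Finset.single_le_sum (fun x _ => hW x y) (Finset.mem_univ x))

lemma swap4' {α β γ δ : Type*} [Fintype α] [Fintype β] [Fintype γ] [Fintype δ]
    (f : γ → δ → α → β → ℝ) :
    (∑ c, ∑ d, ∑ a, ∑ b, f c d a b) = ∑ a, ∑ b, ∑ c, ∑ d, f c d a b := by
  have h1 : (∑ c, ∑ d, ∑ a, ∑ b, f c d a b) = ∑ c, ∑ a, ∑ d, ∑ b, f c d a b :=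
    Finset.sum_congr rfl fun c _ => Finset.sum_comm
  rw [h1, Finset.sum_comm]
  refine Finset.sum_congr rfl fun a _ => ?_
  have h2 : (∑ c, ∑ d, ∑ b, f c d a b) = ∑ c, ∑ b, ∑ d, f c d a b :=
    Finset.sum_congr rfl fun c _ => Finset.sum_comm
  rw [h2, Finset.sum_comm]

lemma sum_pushBoth' {α β γ δ : Type*} [Fintype α] [Fintype β] [Fintype γ] [Fintype δ]
    (φ : α → γ) (ψ : β → δ) (p : α × β → ℝ) :
    ∑ c, ∑ d, pushBoth φ ψ p (c, d) = ∑ a, ∑ b, p (a, b) := by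
  unfold pushBoth
  rw [swap4']
  have key : ∀ (cg : γ) (cd : δ) (r : ℝ),
      (∑ x : γ, ∑ y : δ, if cg = x ∧ cd = y then r else 0) = r := by
    intro cg cd r; simp [ite_and]
  exact Finset.sum_congr rfl fun a _ => Finset.sum_congr rfl fun b _ => key _ _ _

lemma pushBoth_nonneg' {α β γ δ : Type*} [Fintype α] [Fintype β] (φ : α → γ) (ψ : β → δ)
    (p : α × β → ℝ) (hp : ∀ ab, 0 ≤ p ab) (cd : γ × δ) : 0 ≤ pushBoth φ ψ p cd := by
  refine Finset.sum_nonneg fun a _ => Finset.sum_nonneg fun b _ => ?_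
  split <;> simp [hp]

lemma pushBoth_pair {α β γ δ : Type*} [Fintype α] [Fintype β] (φ : α → γ) (ψ : β → δ)
    (p : α × β → ℝ) (c : γ) (d : δ) :
    pushBoth φ ψ p (c, d) = ∑ a, ∑ b, if φ a = c ∧ ψ b = d then p (a, b) else 0 := rfl

lemma term_eq' (p m1 m2 : ℝ) (hp : 0 ≤ p) (h1 : p ≤ m1) (h2 : p ≤ m2) :
    p / 2 * Real.log ((p / 2) / (m1 / 2 * (m2 / 2)))
      = (p * Real.log (p / (m1 * m2)) + p * Real.log 2) / 2 := by
  rcases eq_or_lt_of_le hp with h | h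
  · simp [← h]
  · have hm1 : 0 < m1 := lt_of_lt_of_le h h1
    have hm2 : 0 < m2 := lt_of_lt_of_le h h2
    have e : (p / 2) / (m1 / 2 * (m2 / 2)) = 2 * (p / (m1 * m2)) := by
      field_simp
    rw [e, Real.log_mul (by norm_num) (div_pos h (mul_pos hm1 hm2)).ne']
    ring

section
variable {X Y : Type*} [Fintype X] [Fintype Y] (W : X → Y → ℝ)

lemma bipJoint_lr' (x : X) (y : Y) (hr : 0 < ∑ y', W x y') :
    bipJoint W (Sum.inl x, Sum.inr y) = pXYof W (x, y) / 2 := by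
  show (∑ y', W x y') / (2 * ∑ x', ∑ y', W x' y') * (W x y / ∑ y', W x y')
    = (W x y / ∑ x', ∑ y', W x' y') / 2
  rcases eq_or_lt_of_le (le_of_eq (rfl : (∑ x', ∑ y', W x' y') = _)) with _ | _
  all_goals {
    by_cases hS : (∑ x', ∑ y', W x' y') = 0
    · simp [hS]
    · field_simp }

lemma bipJoint_rl' (x : X) (y : Y) (hc : 0 < ∑ x', W x' y) :
    bipJoint W (Sum.inr y, Sum.inl x) = pXYof W (x, y) / 2 := by
  show (∑ x', W x' y) / (2 * ∑ x', ∑ y', W x' y') * (W x y / ∑ x', W x' y)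
    = (W x y / ∑ x', ∑ y', W x' y') / 2
  by_cases hS : (∑ x', ∑ y', W x' y') = 0
  · simp [hS]
  · field_simp

lemma bipJoint_ll' (x x' : X) : bipJoint W (Sum.inl x, Sum.inl x') = 0 := by
  show bipMu W _ * bipA W _ _ = 0
  simp [bipA]

lemma bipJoint_rr' (y y' : Y) : bipJoint W (Sum.inr y, Sum.inr y') = 0 := by
  show bipMu W _ * bipA W _ _ = 0
  simp [bipA]

end

/-- `I(Z̄₁; Z̄₂) = I(X̄; Ȳ) + H(U)` with `H(U) = log 2` in the stationary
bipartite random walk, for `Z̄ₜ = ζ(Zₜ)` with `ζ = Sum.map Φ Ψ`. -/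
theorem bip_clustered_both_mutualInfo
    {X Y Xb Yb : Type*} [Fintype X] [Fintype Y] [Fintype Xb] [Fintype Yb]
    [Nonempty X] [Nonempty Y]
    (W : X → Y → ℝ) (hW : ∀ x y, 0 ≤ W x y) (hpos : 0 < ∑ x, ∑ y, W x y)
    (hirr : bipIrreducible W) (Φ : X → Xb) (Ψ : Y → Yb) :
    mutualInfo (pushBoth (Sum.map Φ Ψ) (Sum.map Φ Ψ) (bipJoint W))
      = mutualInfo (pushBoth Φ Ψ (pXYof W)) + Real.log 2 := by
  have hrow := row_pos' W hW hirr
  have hcol := col_pos' W hW hirr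
  set p : X × Y → ℝ := pXYof W with hp
  set pb : Xb × Yb → ℝ := pushBoth Φ Ψ p with hpbdef
  set q : (Xb ⊕ Yb) × (Xb ⊕ Yb) → ℝ :=
    pushBoth (Sum.map Φ Ψ) (Sum.map Φ Ψ) (bipJoint W) with hqdef
  have hp0 : ∀ xy, 0 ≤ p xy := fun xy => div_nonneg (hW _ _) hpos.le
  have hpb0 : ∀ cd, 0 ≤ pb cd := pushBoth_nonneg' _ _ _ hp0
  have hJlr : ∀ x y, bipJoint W (Sum.inl x, Sum.inr y) = p (x, y) / 2 :=
    fun x y => bipJoint_lr' W x y (hrow x)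
  have hJrl : ∀ x y, bipJoint W (Sum.inr y, Sum.inl x) = p (x, y) / 2 :=
    fun x y => bipJoint_rl' W x y (hcol y)
  -- values of q on the four blocks
  have hq_lr : ∀ a b, q (Sum.inl a, Sum.inr b) = pb (a, b) / 2 := by
    intro a b
    rw [hqdef, hpbdef, pushBoth_pair, pushBoth_pair]
    simp
    rw [Finset.sum_div]
    refine Finset.sum_congr rfl fun x _ => ?_
    rw [Finset.sum_div]
    refine Finset.sum_congr rfl fun y _ => ?_
    by_cases h : Φ x = a ∧ Ψ y = b <;> simp [h, hJlr x y]
  have hq_rl : ∀ a b, q (Sum.inr b, Sum.inl a) = pb (a, b) / 2 := by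
    intro a b
    rw [hqdef, hpbdef, pushBoth_pair, pushBoth_pair]
    simp
    rw [Finset.sum_comm, Finset.sum_div]
    refine Finset.sum_congr rfl fun x _ => ?_
    rw [Finset.sum_div]
    refine Finset.sum_congr rfl fun y _ => ?_
    by_cases h1 : Φ x = a <;> by_cases h2 : Ψ y = b <;> simp [h1, h2, hJrl x y]
  have hq_ll : ∀ a a', q (Sum.inl a, Sum.inl a') = 0 := by
    intro a a'
    rw [hqdef, pushBoth_pair]
    simp [bipJoint_ll' W]
  have hq_rr : ∀ b b', q (Sum.inr b, Sum.inr b') = 0 := by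
    intro b b'
    rw [hqdef, pushBoth_pair]
    simp [bipJoint_rr' W]
  -- marginals of q
  have hmF_l : ∀ a, margFst q (Sum.inl a) = margFst pb a / 2 := by
    intro a
    show (∑ t : Xb ⊕ Yb, q (Sum.inl a, t)) = (∑ b, pb (a, b)) / 2
    rw [Fintype.sum_sum_type]
    simp only [hq_ll, hq_lr, Finset.sum_const_zero, zero_add]
    rw [Finset.sum_div]
  have hmF_r : ∀ b, margFst q (Sum.inr b) = margSnd pb b / 2 := by
    intro b
    show (∑ t : Xb ⊕ Yb, q (Sum.inr b, t)) = (∑ a, pb (a, b)) / 2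
    rw [Fintype.sum_sum_type]
    simp only [hq_rr, hq_rl, Finset.sum_const_zero, add_zero]
    rw [Finset.sum_div]
  have hmS_l : ∀ a, margSnd q (Sum.inl a) = margFst pb a / 2 := by
    intro a
    show (∑ s : Xb ⊕ Yb, q (s, Sum.inl a)) = (∑ b, pb (a, b)) / 2
    rw [Fintype.sum_sum_type]
    simp only [hq_ll, hq_rl, Finset.sum_const_zero, zero_add]
    rw [Finset.sum_div]
  have hmS_r : ∀ b, margSnd q (Sum.inr b) = margSnd pb b / 2 := by
    intro b
    show (∑ s : Xb ⊕ Yb, q (s, Sum.inr b)) = (∑ a, pb (a, b)) / 2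
    rw [Fintype.sum_sum_type]
    simp only [hq_rr, hq_lr, Finset.sum_const_zero, add_zero]
    rw [Finset.sum_div]
  -- dominance of pb by its marginals
  have hle1 : ∀ a b, pb (a, b) ≤ margFst pb a := by
    intro a b
    exact Finset.single_le_sum (fun b' _ => hpb0 (a, b')) (Finset.mem_univ b)
  have hle2 : ∀ a b, pb (a, b) ≤ margSnd pb b := by
    intro a b
    exact Finset.single_le_sum (fun a' _ => hpb0 (a', b)) (Finset.mem_univ a)
  -- total mass of pb is 1
  have hsum1 : ∑ a, ∑ b, pb (a, b) = 1 := by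
    rw [hpbdef, sum_pushBoth']
    have : ∑ x, ∑ y, p (x, y) = (∑ x, ∑ y, W x y) / (∑ x, ∑ y, W x y) := by
      rw [Finset.sum_div]
      exact Finset.sum_congr rfl fun x _ => by rw [Finset.sum_div]; rfl
    rw [this, div_self hpos.ne']
  -- expand mutualInfo q into the two nonzero blocks
  have expand : mutualInfo q
      = (∑ a, ∑ b, q (Sum.inl a, Sum.inr b) *
          Real.log (q (Sum.inl a, Sum.inr b)
            / (margFst q (Sum.inl a) * margSnd q (Sum.inr b))))
      + (∑ b, ∑ a, q (Sum.inr b, Sum.inl a) *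
          Real.log (q (Sum.inr b, Sum.inl a)
            / (margFst q (Sum.inr b) * margSnd q (Sum.inl a)))) := by
    show (∑ s : Xb ⊕ Yb, ∑ t : Xb ⊕ Yb,
        q (s, t) * Real.log (q (s, t) / (margFst q s * margSnd q t))) = _
    rw [Fintype.sum_sum_type]
    congr 1
    · refine Finset.sum_congr rfl fun a _ => ?_
      rw [Fintype.sum_sum_type]
      simp [hq_ll]
    · refine Finset.sum_congr rfl fun b _ => ?_
      rw [Fintype.sum_sum_type]
      simp [hq_rr]
  set T : ℝ := ∑ a, ∑ b, (pb (a, b) *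
      Real.log (pb (a, b) / (margFst pb a * margSnd pb b))
      + pb (a, b) * Real.log 2) / 2 with hT
  have block1 : (∑ a, ∑ b, q (Sum.inl a, Sum.inr b) *
      Real.log (q (Sum.inl a, Sum.inr b)
        / (margFst q (Sum.inl a) * margSnd q (Sum.inr b)))) = T := by
    refine Finset.sum_congr rfl fun a _ => Finset.sum_congr rfl fun b _ => ?_
    rw [hq_lr, hmF_l, hmS_r]
    exact term_eq' _ _ _ (hpb0 _) (hle1 a b) (hle2 a b)
  have block2 : (∑ b, ∑ a, q (Sum.inr b, Sum.inl a) *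
      Real.log (q (Sum.inr b, Sum.inl a)
        / (margFst q (Sum.inr b) * margSnd q (Sum.inl a)))) = T := by
    rw [Finset.sum_comm]
    refine Finset.sum_congr rfl fun a _ => Finset.sum_congr rfl fun b _ => ?_
    rw [hq_rl, hmF_r, hmS_l, mul_comm (margSnd pb b / 2) (margFst pb a / 2)]
    exact term_eq' _ _ _ (hpb0 _) (hle1 a b) (hle2 a b)
  rw [expand, block1, block2]
  have h1 : T + T = ∑ a, ∑ b, (pb (a, b) *
      Real.log (pb (a, b) / (margFst pb a * margSnd pb b))
      + pb (a, b) * Real.log 2) := by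
    rw [hT, ← Finset.sum_add_distrib]
    refine Finset.sum_congr rfl fun a _ => ?_
    rw [← Finset.sum_add_distrib]
    refine Finset.sum_congr rfl fun b _ => ?_
    ring
  have h3 : (∑ a, ∑ b, (pb (a, b) *
      Real.log (pb (a, b) / (margFst pb a * margSnd pb b))
      + pb (a, b) * Real.log 2))
      = (∑ a, ∑ b, pb (a, b) *
          Real.log (pb (a, b) / (margFst pb a * margSnd pb b)))
        + ∑ a, ∑ b, pb (a, b) * Real.log 2 := by
    rw [← Finset.sum_add_distrib]
    exact Finset.sum_congr rfl fun a _ => Finset.sum_add_distrib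
  have h4 : (∑ a, ∑ b, pb (a, b) * Real.log 2) = Real.log 2 := by
    calc (∑ a, ∑ b, pb (a, b) * Real.log 2)
        = ∑ a, (∑ b, pb (a, b)) * Real.log 2 :=
          Finset.sum_congr rfl fun a _ => (Finset.sum_mul ..).symm
      _ = (∑ a, ∑ b, pb (a, b)) * Real.log 2 := (Finset.sum_mul ..).symm
      _ = Real.log 2 := by rw [hsum1, one_mul]
  have h5 : (∑ a, ∑ b, pb (a, b) *
      Real.log (pb (a, b) / (margFst pb a * margSnd pb b))) = mutualInfo pb := rfl
  rw [h1, h3, h5, h4]
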